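/- arXiv:2507.05449 — 2 statements merged into one kernel-verified Lean document; each statement's English description precedes it below -/
import Mathlib

section
/- Let $(A,B)$ and $(A',B')$ be two partitions of $[m+n]$ into disjoint nonempty sets (so $A \cup B = A' \cup B' = [m+n]$), with $(A,B) \neq (A',B')$. Then the cone $C(A,B) \cap C(A',B') = C(A \cap A', B \cap B')$ spans a linear subspace of dimension strictly less than $m+n-1$. -/
open NNReal

/-- The standard basis vector `e i` of `ℝ^N`. -/
noncomputable def stdBasis {N : ℕ} (i : Fin N) : Fin N → ℝ := Pi.single i 1

/-- The partition cone `C(A,B) = cone {e i - e j : i ∈ A, j ∈ B}`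
(equal to `{0}` when `A` or `B` is empty). -/
noncomputable def partitionCone {N : ℕ} (A B : Finset (Fin N)) : Set (Fin N → ℝ) :=
  (Submodule.span ℝ≥0 {x | ∃ i ∈ A, ∃ j ∈ B, x = stdBasis i - stdBasis j} : Set (Fin N → ℝ))

/-!
A vector `x` lies in `C(A,B)` exactly when `∑ i, x i = 0`, `x ≥ 0` on `A`, `x ≤ 0` on `B` and
`x = 0` off `A ∪ B`: with `s = ∑ i ∈ A, x i > 0` one has
`x = ∑ i ∈ A, ∑ j ∈ B, (x i * (-x j) / s) • (e i - e j)`, the product transport plan.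
Intersecting these descriptions coordinatewise gives `C(A ∩ A', B ∩ B')`. If `(A,B) ≠ (A',B')`,
some coordinate `k` lies in neither `A ∩ A'` nor `B ∩ B'`, so the span of the intersection lies in
the common kernel of the independent functionals `x ↦ ∑ i, x i` and `x ↦ x k`, of dimension `N - 2`.
-/

lemma Finset.sum_sum_smul_sub_eq {ι K M : Type*} [Field K] [AddCommGroup M] [Module K M]
    {A B : Finset ι} (a b : ι → K) (u v : ι → M) (hab : ∑ i ∈ A, a i = ∑ j ∈ B, b j)
    (hb : ∑ j ∈ B, b j ≠ 0) :
    ∑ i ∈ A, ∑ j ∈ B, (a i * b j / ∑ j ∈ B, b j) • (u i - v j) =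
      ∑ i ∈ A, a i • u i - ∑ j ∈ B, b j • v j := by
  simp only [smul_sub, Finset.sum_sub_distrib]
  congr 1
  · refine Finset.sum_congr rfl fun i _ => ?_
    rw [← Finset.sum_smul, ← Finset.sum_div, ← Finset.mul_sum, mul_div_assoc, div_self hb, mul_one]
  · rw [Finset.sum_comm]
    refine Finset.sum_congr rfl fun j _ => ?_
    rw [← Finset.sum_smul, ← Finset.sum_div, ← Finset.sum_mul, hab, mul_div_cancel_left₀ _ hb]

section PartitionCone

variable {N : ℕ} {A B A' B' : Finset (Fin N)}

lemma eq_sum_smul_stdBasis_of_support_subset (hAB : Disjoint A B) {x : Fin N → ℝ}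
    (hx : ∀ i ∉ A ∪ B, x i = 0) :
    x = ∑ i ∈ A, x i • stdBasis i + ∑ j ∈ B, x j • stdBasis j := by
  rw [← Finset.sum_union hAB,
    Finset.sum_subset (Finset.subset_univ _) fun i _ hi => by simp [hx i hi]]
  simp only [stdBasis, ← Pi.single_smul', smul_eq_mul, mul_one, Finset.univ_sum_single]

def signCone (A B : Finset (Fin N)) : Submodule ℝ≥0 (Fin N → ℝ) where
  carrier := {x | ∑ i, x i = 0 ∧ (∀ i ∈ A, 0 ≤ x i) ∧ (∀ j ∈ B, x j ≤ 0) ∧ ∀ i ∉ A ∪ B, x i = 0}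
  zero_mem' := by simp
  add_mem' := by
    rintro x y ⟨hx, hxA, hxB, hx0⟩ ⟨hy, hyA, hyB, hy0⟩
    refine ⟨by simp [Finset.sum_add_distrib, hx, hy], fun i hi => add_nonneg (hxA i hi) (hyA i hi),
      fun j hj => add_nonpos (hxB j hj) (hyB j hj), fun i hi => by simp [hx0 i hi, hy0 i hi]⟩
  smul_mem' := by
    rintro c x ⟨hx, hxA, hxB, hx0⟩
    simp only [NNReal.smul_def, Set.mem_ofPred_eq, Pi.smul_apply, smul_eq_mul]
    exact ⟨by rw [← Finset.mul_sum, hx, mul_zero], fun i hi => mul_nonneg c.2 (hxA i hi),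
      fun j hj => mul_nonpos_of_nonneg_of_nonpos c.2 (hxB j hj), fun i hi => by simp [hx0 i hi]⟩

lemma stdBasis_sub_mem_signCone (hAB : Disjoint A B) {i j : Fin N} (hi : i ∈ A) (hj : j ∈ B) :
    stdBasis i - stdBasis j ∈ signCone A B := by
  refine ⟨by simp [stdBasis, Finset.sum_sub_distrib], fun l hl => ?_, fun l hl => ?_, fun l hl => ?_⟩
  · have hlj : l ≠ j := fun h => Finset.disjoint_left.mp hAB hl (h ▸ hj)
    simp only [stdBasis, Pi.sub_apply, Pi.single_apply, hlj, if_false, sub_zero]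
    split_ifs <;> norm_num
  · have hli : l ≠ i := fun h => Finset.disjoint_left.mp hAB (h ▸ hi) hl
    simp only [stdBasis, Pi.sub_apply, Pi.single_apply, hli, if_false, zero_sub]
    split_ifs <;> norm_num
  · have hli : l ≠ i := fun h => hl (Finset.mem_union_left _ (h ▸ hi))
    have hlj : l ≠ j := fun h => hl (Finset.mem_union_right _ (h ▸ hj))
    simp [stdBasis, hli, hlj]

lemma signCone_le_span (hAB : Disjoint A B) :
    signCone A B ≤ Submodule.span ℝ≥0 {x | ∃ i ∈ A, ∃ j ∈ B, x = stdBasis i - stdBasis j} := by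
  rintro x ⟨hx, hxA, hxB, hx0⟩
  have hsum : ∑ i ∈ A, x i = ∑ j ∈ B, -x j := by
    rw [Finset.sum_neg_distrib, eq_neg_iff_add_eq_zero, ← Finset.sum_union hAB, ← hx]
    exact Finset.sum_subset (Finset.subset_univ _) fun i _ hi => hx0 i hi
  have hxB' : ∀ j ∈ B, 0 ≤ -x j := fun j hj => neg_nonneg.mpr (hxB j hj)
  rcases eq_or_ne (∑ j ∈ B, -x j) 0 with hs | hs
  · have hA0 := (Finset.sum_eq_zero_iff_of_nonneg hxA).mp (hsum.trans hs)
    have hB0 := (Finset.sum_eq_zero_iff_of_nonneg hxB').mp hs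
    suffices x = 0 from this ▸ Submodule.zero_mem _
    funext i
    by_cases hiA : i ∈ A
    · exact hA0 i hiA
    by_cases hiB : i ∈ B
    · exact neg_eq_zero.mp (hB0 i hiB)
    exact hx0 i (by simp [hiA, hiB])
  · rw [eq_sum_smul_stdBasis_of_support_subset hAB hx0, ← sub_neg_eq_add,
      ← Finset.sum_neg_distrib]
    simp only [← neg_smul]
    rw [← Finset.sum_sum_smul_sub_eq _ _ _ _ hsum hs]
    refine Submodule.sum_mem _ fun i hi => Submodule.sum_mem _ fun j hj => ?_
    have hc : 0 ≤ x i * -x j / ∑ j ∈ B, -x j :=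
      div_nonneg (mul_nonneg (hxA i hi) (hxB' j hj)) (Finset.sum_nonneg hxB')
    exact Submodule.smul_mem _ (⟨_, hc⟩ : ℝ≥0) (Submodule.subset_span ⟨i, hi, j, hj, rfl⟩)

lemma partitionCone_eq_signCone (hAB : Disjoint A B) : partitionCone A B = signCone A B :=
  congrArg SetLike.coe <| le_antisymm
    (Submodule.span_le.mpr fun _ ⟨_, hi, _, hj, hx⟩ => hx ▸ stdBasis_sub_mem_signCone hAB hi hj)
    (signCone_le_span hAB)

lemma partitionCone_mono (hA : A ⊆ A') (hB : B ⊆ B') :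
    partitionCone A B ⊆ partitionCone A' B' :=
  Submodule.span_mono fun _ ⟨i, hi, j, hj, hx⟩ => ⟨i, hA hi, j, hB hj, hx⟩

theorem partitionCone_inter (hAB : Disjoint A B) (hA'B' : Disjoint A' B') :
    partitionCone A B ∩ partitionCone A' B' = partitionCone (A ∩ A') (B ∩ B') := by
  refine subset_antisymm ?_ (Set.subset_inter
    (partitionCone_mono Finset.inter_subset_left Finset.inter_subset_left)
    (partitionCone_mono Finset.inter_subset_right Finset.inter_subset_right))
  rw [partitionCone_eq_signCone hAB, partitionCone_eq_signCone hA'B',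
    partitionCone_eq_signCone (hAB.mono Finset.inter_subset_left Finset.inter_subset_left)]
  rintro x ⟨⟨hx, hxA, hxB, hx0⟩, -, hxA', hxB', hx0'⟩
  refine ⟨hx, fun i hi => hxA i (Finset.mem_inter.mp hi).1,
    fun j hj => hxB j (Finset.mem_inter.mp hj).1, fun i hi => ?_⟩
  by_cases hiAB : i ∈ A ∪ B
  swap; exact hx0 i hiAB
  by_cases hiAB' : i ∈ A' ∪ B'
  swap; exact hx0' i hiAB'
  rcases Finset.mem_union.mp hiAB with hiA | hiB <;>
    rcases Finset.mem_union.mp hiAB' with hiA' | hiB'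
  · simp [hiA, hiA'] at hi
  · exact le_antisymm (hxB' i hiB') (hxA i hiA)
  · exact le_antisymm (hxB i hiB) (hxA' i hiA')
  · simp [hiB, hiB'] at hi

lemma exists_notMem_inter_union_inter_of_ne (hAB : Disjoint A B) (hA'B' : Disjoint A' B')
    (hne : (A, B) ≠ (A', B')) : ∃ k, k ∉ A ∩ A' ∪ B ∩ B' := by
  by_contra! h
  have hdisj := Finset.disjoint_left.mp hAB
  have hdisj' := Finset.disjoint_left.mp hA'B'
  refine hne (Prod.ext (Finset.ext fun l => ?_) (Finset.ext fun l => ?_)) <;>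
  · have hl := h l
    simp only [Finset.mem_union, Finset.mem_inter] at hl
    grind

def sumProdEval (k : Fin N) : (Fin N → ℝ) →ₗ[ℝ] ℝ × ℝ :=
  (∑ i, LinearMap.proj i).prod (LinearMap.proj k)

lemma span_partitionCone_le_ker_sumProdEval {k : Fin N} (hk : k ∉ A ∪ B) :
    Submodule.span ℝ (partitionCone A B) ≤ LinearMap.ker (sumProdEval k) := by
  rw [partitionCone, Submodule.span_span_of_tower, Submodule.span_le]
  rintro _ ⟨i, hi, j, hj, rfl⟩
  have hki : k ≠ i := fun h => hk (Finset.mem_union_left _ (h ▸ hi))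
  have hkj : k ≠ j := fun h => hk (Finset.mem_union_right _ (h ▸ hj))
  simp [sumProdEval, stdBasis, Finset.sum_sub_distrib, hki, hkj]

lemma finrank_ker_sumProdEval {k l : Fin N} (hlk : l ≠ k) :
    Module.finrank ℝ (LinearMap.ker (sumProdEval k)) = N - 2 := by
  have hsurj : Function.Surjective (sumProdEval k) := fun ⟨a, b⟩ =>
    ⟨Pi.single k b + Pi.single l (a - b), by simp [sumProdEval, Finset.sum_add_distrib, hlk]⟩
  have hrank := LinearMap.finrank_range_add_finrank_ker (sumProdEval k)
  rw [LinearMap.range_eq_top.mpr hsurj, finrank_top, Module.finrank_prod, Module.finrank_self,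
    Module.finrank_fin_fun] at hrank
  omega

lemma finrank_span_partitionCone_lt {k : Fin N} (hk : k ∉ A ∪ B) (hN : 2 ≤ N) :
    Module.finrank ℝ (Submodule.span ℝ (partitionCone A B)) < N - 1 := by
  have := Fin.nontrivial_iff_two_le.mpr hN
  obtain ⟨l, hlk⟩ := exists_ne k
  have hle := Submodule.finrank_mono (span_partitionCone_le_ker_sumProdEval hk)
  rw [finrank_ker_sumProdEval hlk] at hle
  omega

lemma two_le_of_disjoint_of_nonempty (hAB : Disjoint A B) (hA : A.Nonempty) (hB : B.Nonempty) :
    2 ≤ N := by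
  obtain ⟨a, ha⟩ := hA
  obtain ⟨b, hb⟩ := hB
  exact Fin.nontrivial_iff_two_le.mp ⟨a, b, fun h => Finset.disjoint_left.mp hAB ha (h ▸ hb)⟩

end PartitionCone

theorem intersection_of_two_partition_cones_lower_dim_general {N : ℕ}
    (A B A' B' : Finset (Fin N))
    (hAB : Disjoint A B) (hA'B' : Disjoint A' B')
    (hA : A.Nonempty) (hB : B.Nonempty)
    (hne : (A, B) ≠ (A', B')) :
    partitionCone A B ∩ partitionCone A' B' = partitionCone (A ∩ A') (B ∩ B') ∧
    Module.finrank ℝ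
      (Submodule.span ℝ (partitionCone A B ∩ partitionCone A' B')) < N - 1 := by
  obtain ⟨k, hk⟩ := exists_notMem_inter_union_inter_of_ne hAB hA'B' hne
  rw [partitionCone_inter hAB hA'B']
  exact ⟨rfl, finrank_span_partitionCone_lt hk (two_le_of_disjoint_of_nonempty hAB hA hB)⟩

theorem intersection_of_two_partition_cones_lower_dim {N : ℕ}
    (A B A' B' : Finset (Fin N))
    (hAB : Disjoint A B) (hA'B' : Disjoint A' B')
    (hA : A.Nonempty) (hB : B.Nonempty) (hA' : A'.Nonempty) (hB' : B'.Nonempty)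
    (hcov : A ∪ B = Finset.univ) (hcov' : A' ∪ B' = Finset.univ)
    (hne : (A, B) ≠ (A', B')) :
    partitionCone A B ∩ partitionCone A' B' = partitionCone (A ∩ A') (B ∩ B') ∧
    Module.finrank ℝ
      (Submodule.span ℝ (partitionCone A B ∩ partitionCone A' B')) < N - 1 :=
  intersection_of_two_partition_cones_lower_dim_general A B A' B' hAB hA'B' hA hB hne
end

section
/- Let $m \geq 1$ and $N = m+n$, and consider the collection of cones $\mathcal{C}_m = \{C(A, [N] \setminus A) : \emptyset \neq A \subseteq [m]\}$. Then $\bigcup \mathcal{C}_m = L + C_0$, where $L = \mathrm{span}\{e_1 - e_i : i = 2,\dots,m\}$ and $C_0 = \mathrm{cone}\{\frac{1}{m}(e_1 + \cdots + e_m) - e_i : i = m+1,\dots,m+n\}$. -/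
/-!
Both sides equal the cone `zeroSumNonposOff P`, `P = [m]`, of vectors with coordinate sum `0`
that are nonpositive outside `P`. Such a vector `x` lies in `C(A, Aᶜ)` for its positive support
`A ⊆ P`: with `S = ∑_{i ∈ A} x i`, it is the transport plan
`x = ∑_{i ∈ A, j ∉ A} (x i * (-x j) / S) (e i - e j)`. On the other side, `L` is exactly the space
of zero-sum vectors supported on `P`, and subtracting `∑_{j ∉ P} (-x j) (b - e j)`, with `b` the
barycenter of the `e i` for `i ∈ P`, moves any such `x` into `L`.
-/

open NNReal Pointwise

open Finset

lemma smul_mem_span_nnreal {E : Type*} [AddCommGroup E] [Module ℝ E] {s : Set E} {c : ℝ}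
    (hc : 0 ≤ c) {v : E} (hv : v ∈ s) : c • v ∈ Submodule.span ℝ≥0 s :=
  Submodule.smul_mem _ (⟨c, hc⟩ : ℝ≥0) (Submodule.subset_span hv)

lemma sum_sum_div_smul_sub {ι M : Type*} [AddCommGroup M] [Module ℝ M] (s t : Finset ι)
    (a b : ι → ℝ) (v : ι → M) (hab : ∑ j ∈ t, b j = ∑ i ∈ s, a i) (ha : ∑ i ∈ s, a i ≠ 0) :
    ∑ i ∈ s, ∑ j ∈ t, (a i * b j / ∑ k ∈ s, a k) • (v i - v j) =
      ∑ i ∈ s, a i • v i - ∑ j ∈ t, b j • v j := by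
  have hrow : ∀ i, ∑ j ∈ t, a i * b j / ∑ k ∈ s, a k = a i := fun i => by
    rw [← sum_div, ← mul_sum, hab, mul_div_cancel_right₀ _ ha]
  have hcol : ∀ j, ∑ i ∈ s, a i * b j / ∑ k ∈ s, a k = b j := fun j => by
    rw [← sum_div, ← sum_mul, mul_div_cancel_left₀ _ ha]
  simp only [smul_sub, sum_sub_distrib]
  rw [sum_comm (s := s) (t := t) (f := fun i j => (a i * b j / ∑ k ∈ s, a k) • v j)]
  simp only [← sum_smul, hrow, hcol]

variable {N : ℕ}

lemma stdBasis_apply (i k : Fin N) : stdBasis i k = if k = i then 1 else 0 :=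
  Pi.single_apply i 1 k

lemma sum_stdBasis (i : Fin N) : ∑ k, stdBasis i k = 1 := by
  simp [stdBasis]

lemma sum_smul_stdBasis (x : Fin N → ℝ) : ∑ i, x i • stdBasis i = x := by
  simp only [stdBasis, ← Pi.single_smul', smul_eq_mul, mul_one, univ_sum_single]

lemma sum_smul_stdBasis_of_eq_zero_off {P : Finset (Fin N)} {x : Fin N → ℝ}
    (hx : ∀ j ∉ P, x j = 0) : ∑ i ∈ P, x i • stdBasis i = x := by
  rw [sum_subset (subset_univ P) (fun j _ hj => by rw [hx j hj, zero_smul]), sum_smul_stdBasis]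

lemma mem_partitionCone_of_sum_eq_zero {x : Fin N → ℝ} (hx : ∑ k, x k = 0)
    (hpos : ({i | 0 < x i} : Finset (Fin N)).Nonempty) :
    x ∈ partitionCone {i | 0 < x i} (univ \ ({i | 0 < x i} : Finset (Fin N))) := by
  set A : Finset (Fin N) := {i | 0 < x i}
  have hA : ∀ i ∈ A, 0 < x i := fun i hi => (mem_filter.mp hi).2
  have hB : ∀ j ∈ univ \ A, x j ≤ 0 := fun j hj => by simpa [A] using hj
  have hS : 0 < ∑ i ∈ A, x i := sum_pos hA hpos
  have hbalance : ∑ j ∈ univ \ A, -x j = ∑ i ∈ A, x i := by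
    rw [sum_neg_distrib, neg_eq_iff_add_eq_zero, sum_sdiff (subset_univ A), hx]
  have hx_eq := sum_sum_div_smul_sub A (univ \ A) x (fun j => -x j) stdBasis hbalance hS.ne'
  simp only [neg_smul, sum_neg_distrib, sub_neg_eq_add, add_comm (∑ i ∈ A, _),
    sum_sdiff (subset_univ A), sum_smul_stdBasis] at hx_eq
  rw [partitionCone, SetLike.mem_coe, ← hx_eq]
  refine sum_mem fun i hi => sum_mem fun j hj => smul_mem_span_nnreal ?_ ⟨i, hi, j, hj, rfl⟩
  exact div_nonneg (mul_nonneg (hA i hi).le (neg_nonneg.mpr (hB j hj))) hS.le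

noncomputable def barycenter (P : Finset (Fin N)) : Fin N → ℝ :=
  (#P : ℝ)⁻¹ • ∑ i ∈ P, stdBasis i

lemma barycenter_apply (P : Finset (Fin N)) (k : Fin N) :
    barycenter P k = if k ∈ P then (#P : ℝ)⁻¹ else 0 := by
  simp [barycenter, stdBasis_apply, Finset.sum_apply]

lemma sum_barycenter {P : Finset (Fin N)} (hP : P.Nonempty) : ∑ k, barycenter P k = 1 := by
  simp [barycenter_apply, hP.card_pos.ne']

variable (P : Finset (Fin N))

def zeroSumOn : Submodule ℝ (Fin N → ℝ) where
  carrier := {x | ∑ k, x k = 0 ∧ ∀ j ∉ P, x j = 0}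
  add_mem' := by
    rintro x y ⟨hx, hx'⟩ ⟨hy, hy'⟩
    exact ⟨by simp [sum_add_distrib, hx, hy], fun j hj => by simp [hx' j hj, hy' j hj]⟩
  zero_mem' := by simp
  smul_mem' := by
    rintro c x ⟨hx, hx'⟩
    exact ⟨by simp [← mul_sum, hx], fun j hj => by simp [hx' j hj]⟩

def zeroSumNonposOff : Submodule ℝ≥0 (Fin N → ℝ) where
  carrier := {x | ∑ k, x k = 0 ∧ ∀ j ∉ P, x j ≤ 0}
  add_mem' := by
    rintro x y ⟨hx, hx'⟩ ⟨hy, hy'⟩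
    exact ⟨by simp [sum_add_distrib, hx, hy], fun j hj => add_nonpos (hx' j hj) (hy' j hj)⟩
  zero_mem' := by simp
  smul_mem' := by
    rintro c x ⟨hx, hx'⟩
    exact ⟨by simp [NNReal.smul_def, ← mul_sum, hx],
      fun j hj => mul_nonpos_of_nonneg_of_nonpos c.coe_nonneg (hx' j hj)⟩

variable {P}

lemma zeroSumOn_subset_zeroSumNonposOff :
    (zeroSumOn P : Set (Fin N → ℝ)) ⊆ zeroSumNonposOff P :=
  fun _ ⟨hx, hx'⟩ => ⟨hx, fun j hj => (hx' j hj).le⟩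

lemma partitionCone_subset_zeroSumNonposOff {A : Finset (Fin N)} (hA : A ⊆ P) :
    partitionCone A (univ \ A) ⊆ zeroSumNonposOff P := by
  refine Submodule.span_le.mpr ?_
  rintro _ ⟨i, hi, j, -, rfl⟩
  refine ⟨by simp [sum_sub_distrib, sum_stdBasis], fun k hk => ?_⟩
  have hki : k ≠ i := fun h => hk (h ▸ hA hi)
  simp only [Pi.sub_apply, stdBasis_apply, hki, if_false, zero_sub, Left.neg_nonpos_iff]
  positivity

lemma zeroSumNonposOff_subset_iUnion_partitionCone {p : Fin N} (hp : p ∈ P) :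
    (zeroSumNonposOff P : Set (Fin N → ℝ)) ⊆
      ⋃ (A : Finset (Fin N)) (_ : A.Nonempty) (_ : A ⊆ P), partitionCone A (univ \ A) := by
  rintro x ⟨hx, hx'⟩
  simp only [Set.mem_iUnion]
  by_cases hpos : ({i | 0 < x i} : Finset (Fin N)).Nonempty
  · refine ⟨_, hpos, fun i hi => ?_, mem_partitionCone_of_sum_eq_zero hx hpos⟩
    by_contra hiP
    exact (hx' i hiP).not_gt (mem_filter.mp hi).2
  · have hzero : x = 0 := by
      have hle : ∀ i ∈ univ, x i ≤ 0 := fun i _ => by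
        by_contra h
        exact hpos ⟨i, by simpa using h⟩
      funext i
      exact (sum_eq_zero_iff_of_nonpos hle).mp hx i (mem_univ i)
    exact ⟨{p}, singleton_nonempty p, singleton_subset_iff.mpr hp, hzero ▸ zero_mem _⟩

lemma span_sub_stdBasis_eq_zeroSumOn {p : Fin N} (hp : p ∈ P) :
    Submodule.span ℝ {x | ∃ i ∈ P, i ≠ p ∧ x = stdBasis p - stdBasis i} = zeroSumOn P := by
  refine le_antisymm (Submodule.span_le.mpr ?_) fun x ⟨hx, hx'⟩ => ?_
  · rintro _ ⟨i, hi, -, rfl⟩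
    refine ⟨by simp [sum_sub_distrib, sum_stdBasis], fun j hj => ?_⟩
    have hjp : j ≠ p := fun h => hj (h ▸ hp)
    have hji : j ≠ i := fun h => hj (h ▸ hi)
    simp [stdBasis_apply, hjp, hji]
  · have hsumP : ∑ i ∈ P, x i = 0 := by
      rw [sum_subset (subset_univ P) fun j _ hj => hx' j hj, hx]
    have hx_eq : ∑ i ∈ P, (-x i) • (stdBasis p - stdBasis i) = x := by
      simp only [smul_sub, sum_sub_distrib, ← sum_smul, sum_neg_distrib, hsumP, neg_zero,
        zero_smul, neg_smul, zero_sub, neg_neg, sum_smul_stdBasis_of_eq_zero_off hx']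
    rw [← hx_eq]
    refine sum_mem fun i hi => Submodule.smul_mem _ _ ?_
    by_cases hip : i = p
    · simp [hip]
    · exact Submodule.subset_span ⟨i, hi, hip, rfl⟩

lemma span_barycenter_sub_le_zeroSumNonposOff (hP : P.Nonempty) :
    Submodule.span ℝ≥0 {x | ∃ j ∉ P, x = barycenter P - stdBasis j} ≤ zeroSumNonposOff P := by
  refine Submodule.span_le.mpr ?_
  rintro _ ⟨j, -, rfl⟩
  refine ⟨by simp [sum_sub_distrib, sum_barycenter hP, sum_stdBasis], fun k hk => ?_⟩
  simp only [Pi.sub_apply, barycenter_apply, hk, if_false, stdBasis_apply, zero_sub,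
    Left.neg_nonpos_iff]
  positivity

lemma zeroSumNonposOff_subset_add {p : Fin N} (hp : p ∈ P) :
    (zeroSumNonposOff P : Set (Fin N → ℝ)) ⊆
      (Submodule.span ℝ {x | ∃ i ∈ P, i ≠ p ∧ x = stdBasis p - stdBasis i} : Set (Fin N → ℝ)) +
        (Submodule.span ℝ≥0 {x | ∃ j ∉ P, x = barycenter P - stdBasis j} : Set (Fin N → ℝ)) := by
  rintro x ⟨hx, hx'⟩
  set w := ∑ j ∈ Pᶜ, (-x j) • (barycenter P - stdBasis j)
  have hw : w ∈ Submodule.span ℝ≥0 {x | ∃ j ∉ P, x = barycenter P - stdBasis j} :=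
    sum_mem fun j hj => smul_mem_span_nnreal (neg_nonneg.mpr (hx' j (mem_compl.mp hj)))
      ⟨j, mem_compl.mp hj, rfl⟩
  have hw_sum : ∑ k, w k = 0 := (span_barycenter_sub_le_zeroSumNonposOff ⟨p, hp⟩ hw).1
  have hw_off : ∀ k ∉ P, w k = x k := fun k hk => by
    simp [w, Finset.sum_apply, barycenter_apply, hk, stdBasis_apply]
  refine ⟨x - w, ?_, w, hw, sub_add_cancel x w⟩
  rw [SetLike.mem_coe, span_sub_stdBasis_eq_zeroSumOn hp]
  exact ⟨by simp [sum_sub_distrib, hx, hw_sum], fun k hk => by simp [hw_off k hk]⟩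

theorem iUnion_partitionCone_eq_span_add_span {p : Fin N} (hp : p ∈ P) :
    (⋃ (A : Finset (Fin N)) (_ : A.Nonempty) (_ : A ⊆ P), partitionCone A (univ \ A)) =
      (Submodule.span ℝ {x | ∃ i ∈ P, i ≠ p ∧ x = stdBasis p - stdBasis i} : Set (Fin N → ℝ)) +
        (Submodule.span ℝ≥0 {x | ∃ j ∉ P, x = barycenter P - stdBasis j} : Set (Fin N → ℝ)) := by
  have hunion : (⋃ (A : Finset (Fin N)) (_ : A.Nonempty) (_ : A ⊆ P),
      partitionCone A (univ \ A)) = zeroSumNonposOff P :=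
    (Set.iUnion₂_subset fun A _ => Set.iUnion_subset partitionCone_subset_zeroSumNonposOff).antisymm
      (zeroSumNonposOff_subset_iUnion_partitionCone hp)
  rw [hunion]
  refine (zeroSumNonposOff_subset_add hp).antisymm ?_
  rintro _ ⟨u, hu, w, hw, rfl⟩
  rw [SetLike.mem_coe, span_sub_stdBasis_eq_zeroSumOn hp] at hu
  exact add_mem (zeroSumOn_subset_zeroSumNonposOff hu)
    (span_barycenter_sub_le_zeroSumNonposOff ⟨p, hp⟩ hw)

/-- The union of the cones `C(A, [m+n] \ A)` over all nonempty `A ⊆ [m]` equals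
`L + C₀`, where `L = span {e₁ - eᵢ : 2 ≤ i ≤ m}` and
`C₀ = cone {(1/m)(e₁ + ⋯ + e_m) - eⱼ : m < j ≤ m+n}`. -/
theorem union_partition_cones_eq {m n : ℕ} (hm : 1 ≤ m) :
    (⋃ (A : Finset (Fin (m + n))) (_ : A.Nonempty)
        (_ : A ⊆ Finset.univ.filter (fun i : Fin (m + n) => (i : ℕ) < m)),
        partitionCone A (Finset.univ \ A)) =
      (Submodule.span ℝ {x : Fin (m + n) → ℝ | ∃ i : Fin (m + n),
          (i : ℕ) < m ∧ (i : ℕ) ≠ 0 ∧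
          x = stdBasis (⟨0, by omega⟩ : Fin (m + n)) - stdBasis i} :
        Set (Fin (m + n) → ℝ)) +
      (Submodule.span ℝ≥0 {x : Fin (m + n) → ℝ | ∃ j : Fin (m + n), m ≤ (j : ℕ) ∧
          x = (m : ℝ)⁻¹ •
            (∑ i ∈ Finset.univ.filter (fun i : Fin (m + n) => (i : ℕ) < m), stdBasis i)
            - stdBasis j} :
        Set (Fin (m + n) → ℝ)) := by
  have hp : (⟨0, by omega⟩ : Fin (m + n)) ∈ univ.filter (fun i : Fin (m + n) => (i : ℕ) < m) :=
    mem_filter.mpr ⟨mem_univ _, hm⟩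
  convert iUnion_partitionCone_eq_span_add_span hp using 6
  · simp [Fin.ext_iff]
  · simp [barycenter, Fin.card_filter_val_lt]
end
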